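/- The scattering function f(r) = m(r)/r satisfies: f is nondecreasing on (0,∞); exp(−√(ζ₀/μ)) ≤ f(r) ≤ 1 for all r > 0; 0 ≤ 1 − f(r) ≤ min(1 − exp(−√(ζ₀/μ)), 𝔞₀^μ/r) for all r > 0; and f(r) ≤ (R₀ − 𝔞₀^μ)/R₀ for all 0 < r ≤ R₀. In particular 0 ≤ 𝔞₀^μ < R₀. -/

import Mathlib

/-!
Since `v ≥ 0` and `m > 0`, the equation `μ m'' = v m` makes `m` convex on `[0, ∞)`, with
`m(0) = 0` and `m' = 1` from `R₀` on. Hence `m(r)/r` is a secant slope through the origin, so it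
is nondecreasing and at most `m'(r) ≤ 1`; the secant from `r` to `R₀` gives `m(r) ≥ r - 𝔞₀^μ`.
For the lower bound put `k = √(sup v / μ)`, so that `m'' ≤ k² m`. Then `(m' + k m) e^{-k r}` is
nonincreasing, hence at least its value `(1 + k m(R₀)) e^{-k R₀} ≥ e^{-k R₀}` at `R₀` on `(0, R₀]`.
Together with `m(r) ≤ r m'(r)` and `1 + k r ≤ e^{k r}` this yields `m' ≥ e^{-k R₀}`, and the mean
value theorem carries the bound over to `m(r)/r`.
-/

open Set MeasureTheory

/-- A zero-energy scattering solution `m` for the radial potential `v` supported in `[0, R₀]`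
with semiclassical parameter `μ`: it satisfies `μ m'' = v m` on `(0,∞)`, is continuous on
`[0,∞)` and continuously differentiable on `(0,∞)`, with `m(0) = 0`, `m > 0` on `(0,∞)`, and
`m(r) = r - 𝔞₀^μ` for `r ≥ R₀`, where `𝔞₀^μ := R₀ - m(R₀)` is the scattering length. -/
structure ZeroEnergyScattering (v : ℝ → ℝ) (R₀ μ : ℝ) (m : ℝ → ℝ) : Prop where
  cont : ContinuousOn m (Set.Ici 0)
  diff : ∀ r ∈ Set.Ioi (0 : ℝ), DifferentiableAt ℝ m r
  derivCont : ContinuousOn (deriv m) (Set.Ioi 0)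
  diff2 : ∀ r ∈ Set.Ioi (0 : ℝ), DifferentiableAt ℝ (deriv m) r
  ode : ∀ r ∈ Set.Ioi (0 : ℝ), μ * deriv (deriv m) r = v r * m r
  zero : m 0 = 0
  pos : ∀ r ∈ Set.Ioi (0 : ℝ), 0 < m r
  radiation : ∀ r, R₀ ≤ r → m r = r - (R₀ - m R₀)

namespace ConvexOn

variable {f : ℝ → ℝ}

theorem monotoneOn_div_self (hf : ConvexOn ℝ (Ici 0) f) (hf0 : f 0 = 0) :
    MonotoneOn (fun r => f r / r) (Ioi 0) := fun x hx y hy hxy => by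
  simpa [hf0] using hf.secant_mono self_mem_Ici (mem_Ici.2 hx.le)
    (mem_Ici.2 hy.le) hx.ne' hy.ne' hxy

theorem le_mul_deriv (hf : ConvexOn ℝ (Ici 0) f) (hf0 : f 0 = 0) {r : ℝ} (hr : 0 < r)
    (hfr : DifferentiableAt ℝ f r) : f r ≤ r * deriv f r := by
  have h := hf.slope_le_deriv self_mem_Ici (mem_Ici.2 hr.le) hr hfr
  rwa [slope_def_field, hf0, sub_zero, sub_zero, div_le_iff₀' hr] at h

end ConvexOn

theorem antitoneOn_add_mul_mul_exp_neg {D : Set ℝ} (hD : Convex ℝ D) {f f' f'' : ℝ → ℝ} {k : ℝ}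
    (hf : ∀ x ∈ D, HasDerivAt f (f' x) x) (hf' : ∀ x ∈ D, HasDerivAt f' (f'' x) x)
    (hle : ∀ x ∈ D, f'' x ≤ k ^ 2 * f x) :
    AntitoneOn (fun x => (f' x + k * f x) * Real.exp (-(k * x))) D := by
  have hW : ∀ x ∈ D, HasDerivAt (fun x => (f' x + k * f x) * Real.exp (-(k * x)))
      ((f'' x - k ^ 2 * f x) * Real.exp (-(k * x))) x := fun x hx => by
    have hexp : HasDerivAt (fun x => Real.exp (-(k * x))) (Real.exp (-(k * x)) * -k) x := by
      simpa using ((hasDerivAt_id x).const_mul k).neg.exp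
    exact (((hf' x hx).add ((hf x hx).const_mul k)).mul hexp).congr_deriv
      (by simp only [Pi.add_apply]; ring)
  refine antitoneOn_of_hasDerivWithinAt_nonpos hD
    (fun x hx => (hW x hx).continuousAt.continuousWithinAt)
    (fun x hx => (hW x (interior_subset hx)).hasDerivWithinAt) fun x hx => ?_
  exact mul_nonpos_of_nonpos_of_nonneg (sub_nonpos.2 (hle x (interior_subset hx)))
    (Real.exp_pos _).le

namespace ZeroEnergyScattering

variable {v : ℝ → ℝ} {R₀ μ : ℝ} {m : ℝ → ℝ} (hm : ZeroEnergyScattering v R₀ μ m)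
include hm

theorem deriv_deriv_eq (hμ : μ ≠ 0) {r : ℝ} (hr : 0 < r) :
    deriv (deriv m) r = v r / μ * m r := by
  rw [div_mul_eq_mul_div, eq_div_iff hμ, mul_comm, hm.ode r hr]

theorem convexOn (hμ : 0 < μ) (hv : ∀ r, 0 ≤ v r) : ConvexOn ℝ (Ici 0) m := by
  refine convexOn_of_deriv2_nonneg (convex_Ici 0) hm.cont ?_ ?_ ?_ <;> rw [interior_Ici]
  · exact fun r hr => (hm.diff r hr).differentiableWithinAt
  · exact fun r hr => (hm.diff2 r hr).differentiableWithinAt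
  · intro r hr
    rw [Function.iterate_succ_apply, Function.iterate_one, hm.deriv_deriv_eq hμ.ne' hr]
    exact mul_nonneg (div_nonneg (hv r) hμ.le) (hm.pos r hr).le

theorem monotoneOn_deriv (hμ : 0 < μ) (hv : ∀ r, 0 ≤ v r) : MonotoneOn (deriv m) (Ioi 0) :=
  ((hm.convexOn hμ hv).subset Ioi_subset_Ici_self (convex_Ioi 0)).monotoneOn_deriv hm.diff

theorem deriv_eq_one (hR₀ : 0 < R₀) {r : ℝ} (hr : R₀ ≤ r) : deriv m r = 1 := by
  have hlin : HasDerivWithinAt m 1 (Ici r) r :=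
    ((hasDerivAt_id r).sub_const (R₀ - m R₀)).hasDerivWithinAt.congr
      (fun s hs => hm.radiation s (hr.trans hs)) (hm.radiation r hr)
  exact (uniqueDiffWithinAt_Ici r).eq_deriv _
    (hm.diff r (hR₀.trans_le hr)).hasDerivAt.hasDerivWithinAt hlin

variable (hR₀ : 0 < R₀) (hμ : 0 < μ) (hv : ∀ r, 0 ≤ v r)
include hR₀ hμ hv

theorem deriv_le_one {r : ℝ} (hr : 0 < r) : deriv m r ≤ 1 := by
  have hR : 0 < max r R₀ := hr.trans_le (le_max_left r R₀)
  calc deriv m r ≤ deriv m (max r R₀) := hm.monotoneOn_deriv hμ hv hr hR (le_max_left r R₀)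
    _ = 1 := hm.deriv_eq_one hR₀ (le_max_right r R₀)

theorem le_self {r : ℝ} (hr : 0 < r) : m r ≤ r := by
  calc m r ≤ r * deriv m r := (hm.convexOn hμ hv).le_mul_deriv hm.zero hr (hm.diff r hr)
    _ ≤ r := mul_le_of_le_one_right hr.le (hm.deriv_le_one hR₀ hμ hv hr)

theorem sub_scatteringLength_le {r : ℝ} (hr : 0 < r) : r - (R₀ - m R₀) ≤ m r := by
  rcases lt_or_ge r R₀ with hrR | hRr
  · have h := (hm.convexOn hμ hv).slope_le_deriv (mem_Ici.2 hr.le) (mem_Ici.2 hR₀.le) hrR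
      (hm.diff R₀ hR₀)
    rw [hm.deriv_eq_one hR₀ le_rfl, slope_def_field, div_le_one (sub_pos.2 hrR)] at h
    linarith
  · exact (hm.radiation r hRr).ge

theorem exp_neg_le_deriv {k : ℝ} (hk : 0 ≤ k) (hvk : ∀ r, v r ≤ μ * k ^ 2) {r : ℝ}
    (hr : 0 < r) : Real.exp (-(k * R₀)) ≤ deriv m r := by
  obtain hRr | hrR := lt_or_ge R₀ r
  · rw [hm.deriv_eq_one hR₀ hRr.le, Real.exp_le_one_iff, neg_nonpos]
    exact mul_nonneg hk hR₀.le
  have hW := antitoneOn_add_mul_mul_exp_neg (convex_Ioi 0) (k := k)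
    (fun s hs => (hm.diff s hs).hasDerivAt) (fun s hs => (hm.diff2 s hs).hasDerivAt)
    fun s hs => by
      rw [hm.deriv_deriv_eq hμ.ne' hs]
      exact mul_le_mul_of_nonneg_right ((div_le_iff₀' hμ).2 (hvk s)) (hm.pos s hs).le
  have hWr := hW (mem_Ioi.2 hr) (mem_Ioi.2 hR₀) hrR
  simp only [hm.deriv_eq_one hR₀ le_rfl] at hWr
  have hmr := (hm.convexOn hμ hv).le_mul_deriv hm.zero hr (hm.diff r hr)
  have hderiv_pos : 0 < deriv m r := (mul_pos_iff_of_pos_left hr).1 ((hm.pos r hr).trans_le hmr)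
  have hexp : (1 + k * r) * Real.exp (-(k * r)) ≤ 1 :=
    calc (1 + k * r) * Real.exp (-(k * r)) ≤ Real.exp (k * r) * Real.exp (-(k * r)) := by
          gcongr
          linarith [Real.add_one_le_exp (k * r)]
      _ = 1 := by rw [← Real.exp_add, add_neg_cancel, Real.exp_zero]
  calc Real.exp (-(k * R₀)) ≤ (1 + k * m R₀) * Real.exp (-(k * R₀)) :=
        le_mul_of_one_le_left (Real.exp_pos _).le
          (le_add_of_nonneg_right (mul_nonneg hk (hm.pos R₀ hR₀).le))
    _ ≤ (deriv m r + k * m r) * Real.exp (-(k * r)) := hWr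
    _ ≤ deriv m r * ((1 + k * r) * Real.exp (-(k * r))) := by
        rw [← mul_assoc]
        gcongr
        linarith [mul_le_mul_of_nonneg_left hmr hk]
    _ ≤ deriv m r := mul_le_of_le_one_right hderiv_pos.le hexp

theorem exp_neg_le_div_self {k : ℝ} (hk : 0 ≤ k) (hvk : ∀ r, v r ≤ μ * k ^ 2) {r : ℝ}
    (hr : 0 < r) : Real.exp (-(k * R₀)) ≤ m r / r := by
  obtain ⟨ξ, hξ, hslope⟩ := exists_deriv_eq_slope m hr (hm.cont.mono Icc_subset_Ici_self)
    fun s hs => (hm.diff s hs.1).differentiableWithinAt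
  rw [hm.zero, sub_zero, sub_zero] at hslope
  exact hslope ▸ hm.exp_neg_le_deriv hR₀ hμ hv hk hvk hξ.1

end ZeroEnergyScattering

theorem scattering_function_pointwise_bounds_general
    (R₀ μ : ℝ) (hR₀ : 0 < R₀) (hμ : 0 < μ)
    (v : ℝ → ℝ) (hv_nonneg : ∀ r, 0 ≤ v r)
    (hv_bdd : BddAbove (Set.range v))
    (m : ℝ → ℝ) (hm : ZeroEnergyScattering v R₀ μ m) :
    MonotoneOn (fun r => m r / r) (Set.Ioi 0) ∧
    (∀ r, 0 < r →
      Real.exp (-Real.sqrt (R₀ ^ 2 * (⨆ r', v r') / μ)) ≤ m r / r ∧ m r / r ≤ 1) ∧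
    (∀ r, 0 < r →
      0 ≤ 1 - m r / r ∧
      1 - m r / r ≤
        min (1 - Real.exp (-Real.sqrt (R₀ ^ 2 * (⨆ r', v r') / μ))) ((R₀ - m R₀) / r)) ∧
    (∀ r, 0 < r → r ≤ R₀ → m r / r ≤ (R₀ - (R₀ - m R₀)) / R₀) ∧
    (0 ≤ R₀ - m R₀ ∧ R₀ - m R₀ < R₀) := by
  set k := Real.sqrt ((⨆ r', v r') / μ)
  have hsup : 0 ≤ (⨆ r', v r') / μ := div_nonneg ((hv_nonneg 0).trans (le_ciSup hv_bdd 0)) hμ.le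
  have hvk : ∀ r, v r ≤ μ * k ^ 2 := fun r => by
    rw [Real.sq_sqrt hsup, mul_div_cancel₀ _ hμ.ne']
    exact le_ciSup hv_bdd r
  have hexponent : Real.sqrt (R₀ ^ 2 * (⨆ r', v r') / μ) = k * R₀ := by
    rw [mul_div_assoc, Real.sqrt_mul (sq_nonneg R₀), Real.sqrt_sq hR₀.le, mul_comm]
  have hmono := (hm.convexOn hμ hv_nonneg).monotoneOn_div_self hm.zero
  have hlower := fun r (hr : 0 < r) =>
    hm.exp_neg_le_div_self hR₀ hμ hv_nonneg (Real.sqrt_nonneg _) hvk hr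
  have hupper := fun r (hr : 0 < r) => (div_le_one hr).2 (hm.le_self hR₀ hμ hv_nonneg hr)
  rw [hexponent]
  refine ⟨hmono, fun r hr => ⟨hlower r hr, hupper r hr⟩,
    fun r hr => ⟨sub_nonneg.2 (hupper r hr), le_min (by linarith [hlower r hr]) ?_⟩,
    fun r hr hrR => ?_, ?_, ?_⟩
  · rw [one_sub_div hr.ne', div_le_div_iff_of_pos_right hr]
    linarith [hm.sub_scatteringLength_le hR₀ hμ hv_nonneg hr]
  · rw [sub_sub_cancel]
    exact hmono hr hR₀ hrR
  · linarith [hm.le_self hR₀ hμ hv_nonneg hR₀]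
  · linarith [hm.pos R₀ hR₀]

/-- **Pointwise bounds for the scattering function** `f(r) = m(r)/r`: `f` is nondecreasing on
`(0,∞)`, satisfies `exp(-√(ζ₀/μ)) ≤ f(r) ≤ 1`, `0 ≤ 1 - f(r) ≤ min(1 - exp(-√(ζ₀/μ)), 𝔞₀^μ/r)`,
and `f(r) ≤ (R₀ - 𝔞₀^μ)/R₀` on `(0, R₀]`; in particular `0 ≤ 𝔞₀^μ < R₀`.
Here `ζ₀ = R₀² ⨆ᵣ v(r)` and `𝔞₀^μ = R₀ - m(R₀)`. -/
theorem scattering_function_pointwise_bounds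
    (R₀ μ : ℝ) (hR₀ : 0 < R₀) (hμ : 0 < μ)
    (v : ℝ → ℝ) (hv_meas : Measurable v) (hv_nonneg : ∀ r, 0 ≤ v r)
    (hv_bdd : BddAbove (Set.range v))
    (hv_supp : ∀ r, R₀ ≤ r → v r = 0)
    (m : ℝ → ℝ) (hm : ZeroEnergyScattering v R₀ μ m) :
    MonotoneOn (fun r => m r / r) (Set.Ioi 0) ∧
    (∀ r, 0 < r →
      Real.exp (-Real.sqrt (R₀ ^ 2 * (⨆ r', v r') / μ)) ≤ m r / r ∧ m r / r ≤ 1) ∧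
    (∀ r, 0 < r →
      0 ≤ 1 - m r / r ∧
      1 - m r / r ≤
        min (1 - Real.exp (-Real.sqrt (R₀ ^ 2 * (⨆ r', v r') / μ))) ((R₀ - m R₀) / r)) ∧
    (∀ r, 0 < r → r ≤ R₀ → m r / r ≤ (R₀ - (R₀ - m R₀)) / R₀) ∧
    (0 ≤ R₀ - m R₀ ∧ R₀ - m R₀ < R₀) :=
  scattering_function_pointwise_bounds_general R₀ μ hR₀ hμ v hv_nonneg hv_bdd m hm
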